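/- arXiv:1112.1346 — 2 statements merged into one kernel-verified Lean document; each statement's English description precedes it below -/
import Mathlib

section
/- Let h be a bilinear form on an n-dimensional real inner product space (V,g), and set t_{n−1}(h) := (1/(n−1)!)·*(h^{n−1}). Then in any orthonormal basis (e_i), t_{n−1}(h)(e_i,e_j) = (−1)^{i+j} times the determinant of the (n−1)×(n−1) matrix obtained from the matrix (h(e_a,e_b)) by deleting the i-th row and the j-th column; that is, the matrix of t_{n−1}(h) is the cofactor matrix (the transpose of the adjugate) of the matrix of h. -/
noncomputable section

open Finset

/-- Double forms over an `n`-dimensional real inner product space, described by their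
coefficients in a fixed orthonormal basis: a `(p,q)`-double form corresponds to a function
supported on pairs of subsets of cardinalities `p` and `q`. -/
abbrev DForm (n : ℕ) := Finset (Fin n) → Finset (Fin n) → ℝ

namespace DForm

variable {n : ℕ}

/-- Sign of the shuffle placing the elements of `A` (in increasing order) before
those of `B` (in increasing order). -/
def shuffleSign (A B : Finset (Fin n)) : ℝ :=
  (-1 : ℝ) ^ (∑ x ∈ B, (A.filter fun a => x < a).card)

/-- The exterior product of double forms. -/
def wedge (ω₁ ω₂ : DForm n) : DForm n := fun I J =>
  ∑ A ∈ I.powerset, ∑ B ∈ J.powerset,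
    shuffleSign A (I \ A) * shuffleSign B (J \ B) * ω₁ A B * ω₂ (I \ A) (J \ B)

/-- Exterior powers `ω^k` of a double form. -/
def dpow (ω : DForm n) : ℕ → DForm n
  | 0 => fun I J => if I = ∅ ∧ J = ∅ then 1 else 0
  | k + 1 => wedge ω (dpow ω k)

/-- The double Hodge star operator. -/
def hstar (ω : DForm n) : DForm n := fun I J =>
  shuffleSign Iᶜ I * shuffleSign Jᶜ J * ω Iᶜ Jᶜ

/-- The contraction `c` of double forms. -/
def contr (ω : DForm n) : DForm n := fun I J =>
  ∑ j : Fin n,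
    if j ∈ I ∨ j ∈ J then 0
    else shuffleSign {j} I * shuffleSign {j} J * ω (insert j I) (insert j J)

/-- Iterated contraction `c^k`. -/
def citer (ω : DForm n) : ℕ → DForm n
  | 0 => ω
  | k + 1 => contr (citer ω k)

/-- The inner product of double forms. -/
def dinner (ω₁ ω₂ : DForm n) : ℝ :=
  ∑ I : Finset (Fin n), ∑ J : Finset (Fin n), ω₁ I J * ω₂ I J

/-- The transpose `ω^t` of a double form. -/
def transp (ω : DForm n) : DForm n := fun I J => ω J I

/-- The composition (Greub) product `ω₁ ∘ ω₂` of double forms. -/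
def comp (ω₁ ω₂ : DForm n) : DForm n := fun I J =>
  ∑ K : Finset (Fin n), ω₂ I K * ω₁ K J

/-- The scalar value of a `(0,0)`-double form. -/
def toScalar (ω : DForm n) : ℝ := ω ∅ ∅

/-- The metric, as a `(1,1)`-double form. -/
def gMetric (n : ℕ) : DForm n := fun I J => if I = J ∧ I.card = 1 then 1 else 0

/-- Iterated composition power `ω^{∘r}` of a `(1,1)`-double form, with `ω^{∘0} = g`. -/
def cpow (ω : DForm n) : ℕ → DForm n
  | 0 => gMetric n
  | r + 1 => comp ω (cpow ω r)

/-- The `(1,1)`-double form associated to a bilinear form, given by its matrix in the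
orthonormal basis. -/
def ofMatrix (h : Matrix (Fin n) (Fin n) ℝ) : DForm n := fun I J =>
  ∑ i : Fin n, ∑ j : Fin n, if I = {i} ∧ J = {j} then h i j else 0

/-- `ω` is a `(p,q)`-double form. -/
def IsOfDeg (ω : DForm n) (p q : ℕ) : Prop :=
  ∀ I J : Finset (Fin n), ω I J ≠ 0 → I.card = p ∧ J.card = q

/-- `ω` is a symmetric double form. -/
def IsSym (ω : DForm n) : Prop := ∀ I J, ω I J = ω J I

/-- The sign relating `e_{v 0} ∧ ⋯ ∧ e_{v (p-1)}` to the corresponding increasing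
basis `p`-vector (and `0` if the indices are not pairwise distinct). -/
def tupleSign {p : ℕ} (v : Fin p → Fin n) : ℝ :=
  if Function.Injective v then (((Equiv.Perm.sign (Tuple.sort v)) : ℤ) : ℝ) else 0

/-- Evaluation of a double form on wedges of basis vectors indexed by arbitrary tuples. -/
def evalT (ω : DForm n) {p q : ℕ} (v : Fin p → Fin n) (w : Fin q → Fin n) : ℝ :=
  tupleSign v * tupleSign w * ω (Finset.image v Finset.univ) (Finset.image w Finset.univ)

/-- The first Bianchi identity for a `(2,2)`-double form:
`R(x∧y,z∧t) + R(y∧z,x∧t) + R(z∧x,y∧t) = 0`. -/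
def Bianchi2 (R : DForm n) : Prop :=
  ∀ x y z t : Fin n,
    evalT R ![x, y] ![z, t] + evalT R ![y, z] ![x, t] + evalT R ![z, x] ![y, t] = 0

/-- The first Bianchi identity for a `(p,p)`-double form. -/
def FirstBianchi (ω : DForm n) (p : ℕ) : Prop :=
  ∀ (x : Fin (p + 1) → Fin n) (y : Fin (p - 1) → Fin n),
    ∑ j : Fin (p + 1),
      (-1 : ℝ) ^ (j : ℕ) * evalT ω (x ∘ Fin.succAbove j) (Fin.cons (x j) y) = 0

/-- The characteristic coefficient `s_k(h)` of a bilinear form `h`, defined through the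
characteristic polynomial: `det(h - λ g) = ∑ (-1)^(n-i) s_i(h) λ^(n-i)`. -/
def sInv (h : Matrix (Fin n) (Fin n) ℝ) (k : ℕ) : ℝ :=
  (-1 : ℝ) ^ k * (Matrix.charpoly h).coeff (n - k)

/-- The `k`-th cofactor (Newton) transformation `t_k(h) = (1/(k!(n-1-k)!)) *(g^{n-1-k} h^k)`. -/
def tInv (h : Matrix (Fin n) (Fin n) ℝ) (k : ℕ) : DForm n :=
  ((k.factorial * (n - 1 - k).factorial : ℕ) : ℝ)⁻¹ •
    hstar (wedge (dpow (gMetric n) (n - 1 - k)) (dpow (ofMatrix h) k))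

/-- The `(r,q)`-cofactor `s_{(r,q)}(h) = (1/(q!(n-q-r)!)) *(g^{n-q-r} h^q)`. -/
def sCof (h : Matrix (Fin n) (Fin n) ℝ) (r q : ℕ) : DForm n :=
  ((q.factorial * (n - q - r).factorial : ℕ) : ℝ)⁻¹ •
    hstar (wedge (dpow (gMetric n) (n - q - r)) (dpow (ofMatrix h) q))

end DForm

/-! The `(k,k)`-form `h^k` is `k!` times the form of `k × k` minors of `h`: expanding
`h^{k+1} = h ∧ h^k` along the factor `h` reproduces, up to the factor `k + 1` coming from the
choice of the row, the Laplace expansion of a `(k+1) × (k+1)` minor. The Hodge star then picks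
out the minor complementary to `e_i ⊗ e_j`, with the shuffle signs combining to `(-1)^(i+j)`. -/

namespace Finset

variable {α : Type*}

theorem sum_powerset_eq_sum_singleton [DecidableEq α] {β : Type*} [AddCommMonoid β]
    (s : Finset α) (f : Finset α → β) (hf : ∀ t ⊆ s, t.card ≠ 1 → f t = 0) :
    ∑ t ∈ s.powerset, f t = ∑ a ∈ s, f {a} := by
  have hsingle : ∑ a ∈ s, f {a} = ∑ t ∈ s.powersetCard 1, f t := by
    rw [powersetCard_one, sum_map]
    rfl
  rw [hsingle]
  refine (sum_subset (fun t ht => mem_powerset.2 (mem_powersetCard.1 ht).1)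
    fun t ht ht1 => hf t (mem_powerset.1 ht) ?_).symm
  exact fun h1 => ht1 (mem_powersetCard.2 ⟨mem_powerset.1 ht, h1⟩)

variable [LinearOrder α]

theorem card_filter_lt_orderEmbOfFin (s : Finset α) {k : ℕ} (h : s.card = k) (p : Fin k) :
    (s.filter (· < s.orderEmbOfFin h p)).card = p := by
  have hs : s.filter (· < s.orderEmbOfFin h p) = (Iio p).map (s.orderEmbOfFin h).toEmbedding := by
    ext x
    simp only [mem_filter, mem_map, mem_Iio, RelEmbedding.coe_toEmbedding]
    constructor
    · rintro ⟨hx, hlt⟩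
      obtain ⟨q, rfl⟩ : x ∈ Set.range (s.orderEmbOfFin h) := by rwa [range_orderEmbOfFin]
      exact ⟨q, (s.orderEmbOfFin h).lt_iff_lt.1 hlt, rfl⟩
    · rintro ⟨q, hq, rfl⟩
      exact ⟨orderEmbOfFin_mem s h q, (s.orderEmbOfFin h).lt_iff_lt.2 hq⟩
  rw [hs, card_map, Fin.card_Iio]

theorem sum_orderEmbOfFin {β : Type*} [AddCommMonoid β] (s : Finset α) {k : ℕ} (h : s.card = k)
    (f : α → β) : ∑ a ∈ s, f a = ∑ p, f (s.orderEmbOfFin h p) := by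
  conv_lhs => rw [← map_orderEmbOfFin_univ s h]
  rw [sum_map]
  rfl

theorem orderEmbOfFin_erase (s : Finset α) {k : ℕ} (h : s.card = k + 1) (p : Fin (k + 1))
    (h' : (s.erase (s.orderEmbOfFin h p)).card = k) :
    ⇑((s.erase (s.orderEmbOfFin h p)).orderEmbOfFin h') = s.orderEmbOfFin h ∘ p.succAbove := by
  refine (orderEmbOfFin_unique h' (fun a => mem_erase.2 ⟨?_, orderEmbOfFin_mem s h _⟩)
    ((s.orderEmbOfFin h).strictMono.comp (Fin.strictMono_succAbove p))).symm
  exact fun hx => p.succAbove_ne a ((s.orderEmbOfFin h).injective hx)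

end Finset

namespace DForm

variable {n : ℕ}

def minor (h : Matrix (Fin n) (Fin n) ℝ) (k : ℕ) (I J : Finset (Fin n)) : ℝ :=
  if hc : I.card = k ∧ J.card = k then
    (h.submatrix (I.orderEmbOfFin hc.1) (J.orderEmbOfFin hc.2)).det
  else 0

lemma minor_of_card (h : Matrix (Fin n) (Fin n) ℝ) {k : ℕ} {I J : Finset (Fin n)}
    (hI : I.card = k) (hJ : J.card = k) :
    minor h k I J = (h.submatrix (I.orderEmbOfFin hI) (J.orderEmbOfFin hJ)).det :=
  dif_pos ⟨hI, hJ⟩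

lemma minor_of_not_card (h : Matrix (Fin n) (Fin n) ℝ) {k : ℕ} {I J : Finset (Fin n)}
    (hc : ¬(I.card = k ∧ J.card = k)) : minor h k I J = 0 :=
  dif_neg hc

lemma shuffleSign_empty_left (B : Finset (Fin n)) : shuffleSign ∅ B = 1 := by
  simp [shuffleSign]

lemma shuffleSign_singleton_left (i : Fin n) (B : Finset (Fin n)) :
    shuffleSign {i} B = (-1 : ℝ) ^ (B.filter (· < i)).card := by
  rw [shuffleSign, card_filter]
  congr 1
  refine sum_congr rfl fun x _ => ?_
  rw [filter_singleton]
  split <;> simp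

lemma shuffleSign_singleton_erase_orderEmbOfFin {k : ℕ} (I : Finset (Fin n)) (hI : I.card = k)
    (p : Fin k) :
    shuffleSign {I.orderEmbOfFin hI p} (I.erase (I.orderEmbOfFin hI p)) = (-1 : ℝ) ^ (p : ℕ) := by
  rw [shuffleSign_singleton_left, filter_erase, erase_eq_of_notMem (by simp),
    card_filter_lt_orderEmbOfFin]

lemma shuffleSign_compl_singleton {m : ℕ} (i : Fin (m + 1)) :
    shuffleSign {i}ᶜ {i} = (-1 : ℝ) ^ (m - i : ℕ) := by
  have hgt : ({i}ᶜ : Finset (Fin (m + 1))).filter (i < ·) = Ioi i := by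
    ext a
    simpa using fun h : i < a => h.ne'
  rw [shuffleSign, sum_singleton, hgt, Fin.card_Ioi, Nat.add_sub_cancel]

lemma ofMatrix_singleton (h : Matrix (Fin n) (Fin n) ℝ) (i j : Fin n) :
    ofMatrix h {i} {j} = h i j := by
  simp [ofMatrix, ite_and]

lemma ofMatrix_eq_zero_of_card_ne_one (h : Matrix (Fin n) (Fin n) ℝ) {A B : Finset (Fin n)}
    (hAB : A.card ≠ 1 ∨ B.card ≠ 1) : ofMatrix h A B = 0 := by
  refine sum_eq_zero fun i _ => sum_eq_zero fun j _ => if_neg ?_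
  rintro ⟨rfl, rfl⟩
  simp at hAB

lemma dpow_zero_wedge (ω ω' : DForm n) (I J : Finset (Fin n)) :
    wedge (dpow ω 0) ω' I J = ω' I J := by
  rw [wedge, sum_eq_single_of_mem ∅ (empty_mem_powerset I), sum_eq_single_of_mem ∅
    (empty_mem_powerset J)]
  · simp [dpow, shuffleSign_empty_left]
  · intro B _ hB
    simp [dpow, hB]
  · intro A _ hA
    refine sum_eq_zero fun B _ => ?_
    simp [dpow, hA]

lemma wedge_ofMatrix (h : Matrix (Fin n) (Fin n) ℝ) (ω : DForm n) (I J : Finset (Fin n)) :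
    wedge (ofMatrix h) ω I J =
      ∑ i ∈ I, ∑ j ∈ J, shuffleSign {i} (I.erase i) * shuffleSign {j} (J.erase j) * h i j *
        ω (I.erase i) (J.erase j) := by
  rw [wedge, sum_powerset_eq_sum_singleton]
  · refine sum_congr rfl fun i _ => ?_
    rw [sum_powerset_eq_sum_singleton]
    · simp only [ofMatrix_singleton, sdiff_singleton_eq_erase]
    · intro B _ hB
      rw [ofMatrix_eq_zero_of_card_ne_one h (Or.inr hB), mul_zero, zero_mul]
  · intro A _ hA
    refine sum_eq_zero fun B _ => ?_
    rw [ofMatrix_eq_zero_of_card_ne_one h (Or.inl hA), mul_zero, zero_mul]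

lemma minor_erase_orderEmbOfFin (h : Matrix (Fin n) (Fin n) ℝ) {k : ℕ} {I J : Finset (Fin n)}
    (hI : I.card = k + 1) (hJ : J.card = k + 1) (p b : Fin (k + 1)) :
    minor h k (I.erase (I.orderEmbOfFin hI p)) (J.erase (J.orderEmbOfFin hJ b)) =
      ((h.submatrix (I.orderEmbOfFin hI) (J.orderEmbOfFin hJ)).submatrix
        p.succAbove b.succAbove).det := by
  have hI' : (I.erase (I.orderEmbOfFin hI p)).card = k := by simp [hI]
  have hJ' : (J.erase (J.orderEmbOfFin hJ b)).card = k := by simp [hJ]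
  rw [minor_of_card h hI' hJ', orderEmbOfFin_erase, orderEmbOfFin_erase, Matrix.submatrix_submatrix]

lemma sum_laplace_minor (h : Matrix (Fin n) (Fin n) ℝ) (k : ℕ) {I J : Finset (Fin n)}
    (hI : I.card = k + 1) (hJ : J.card = k + 1) :
    ∑ i ∈ I, ∑ j ∈ J, shuffleSign {i} (I.erase i) * shuffleSign {j} (J.erase j) * h i j *
        minor h k (I.erase i) (J.erase j) =
      (k + 1) * minor h (k + 1) I J := by
  have hrow : ∀ p : Fin (k + 1), ∑ b : Fin (k + 1), (-1 : ℝ) ^ (p : ℕ) * (-1) ^ (b : ℕ) *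
      h (I.orderEmbOfFin hI p) (J.orderEmbOfFin hJ b) *
        ((h.submatrix (I.orderEmbOfFin hI) (J.orderEmbOfFin hJ)).submatrix
          p.succAbove b.succAbove).det =
      (h.submatrix (I.orderEmbOfFin hI) (J.orderEmbOfFin hJ)).det := fun p => by
    rw [Matrix.det_succ_row _ p]
    exact sum_congr rfl fun b _ => by rw [pow_add]; rfl
  simp only [sum_orderEmbOfFin I hI, sum_orderEmbOfFin J hJ,
    shuffleSign_singleton_erase_orderEmbOfFin, minor_erase_orderEmbOfFin h hI hJ, hrow, sum_const,
    card_univ, Fintype.card_fin, nsmul_eq_mul, minor_of_card h hI hJ]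
  push_cast
  ring

lemma dpow_ofMatrix_apply (h : Matrix (Fin n) (Fin n) ℝ) (k : ℕ) (I J : Finset (Fin n)) :
    dpow (ofMatrix h) k I J = k.factorial * minor h k I J := by
  induction k generalizing I J with
  | zero =>
    by_cases hIJ : I = ∅ ∧ J = ∅
    · obtain ⟨rfl, rfl⟩ := hIJ
      simp [dpow, minor_of_card h card_empty card_empty]
    · rw [minor_of_not_card h (by simpa only [card_eq_zero] using hIJ)]
      simp [dpow, hIJ]
  | succ k ih =>
    simp only [dpow, wedge_ofMatrix, ih, fun a b : ℝ => mul_left_comm a (Nat.factorial k : ℝ) b,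
      ← mul_sum]
    by_cases hc : I.card = k + 1 ∧ J.card = k + 1
    · rw [sum_laplace_minor h k hc.1 hc.2, Nat.factorial_succ]
      push_cast
      ring
    · rw [minor_of_not_card h hc, mul_zero]
      refine mul_eq_zero_of_right _ (sum_eq_zero fun i hi => sum_eq_zero fun j hj => ?_)
      rw [minor_of_not_card h, mul_zero]
      rintro ⟨hi', hj'⟩
      exact hc ⟨by rw [← card_erase_add_one hi, hi'], by rw [← card_erase_add_one hj, hj']⟩

lemma hstar_singleton {m : ℕ} (ω : DForm (m + 1)) (i j : Fin (m + 1)) :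
    hstar ω {i} {j} = (-1) ^ ((i : ℕ) + j) * ω {i}ᶜ {j}ᶜ := by
  rw [hstar, shuffleSign_compl_singleton, shuffleSign_compl_singleton, ← pow_add,
    neg_one_pow_eq_pow_mod_two, neg_one_pow_eq_pow_mod_two ((i : ℕ) + j)]
  have := i.is_le
  have := j.is_le
  congr 2
  omega

lemma minor_compl_singleton {m : ℕ} (h : Matrix (Fin (m + 1)) (Fin (m + 1)) ℝ)
    (i j : Fin (m + 1)) :
    minor h m {i}ᶜ {j}ᶜ = (h.submatrix i.succAbove j.succAbove).det := by
  have hcard : ∀ i : Fin (m + 1), ({i}ᶜ : Finset (Fin (m + 1))).card = m := fun i => by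
    simp [card_compl]
  rw [minor_of_card h (hcard i) (hcard j)]
  congr 2 <;> ext a <;> simp

end DForm

open DForm in
/-- `t_{n-1}(h) = (1/(n-1)!) * (h^{n-1})` has matrix entries the cofactors of the matrix of
`h`; i.e. its matrix is the cofactor matrix, the transpose of the adjugate. Here `n = m+1`. -/
theorem statement3 (m : ℕ) (h : Matrix (Fin (m + 1)) (Fin (m + 1)) ℝ) :
    (∀ i j : Fin (m + 1),
      tInv h m {i} {j} =
        (-1 : ℝ) ^ ((i : ℕ) + (j : ℕ)) *
          (h.submatrix (Fin.succAbove i) (Fin.succAbove j)).det) ∧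
    Matrix.of (fun i j : Fin (m + 1) => tInv h m {i} {j}) = (Matrix.adjugate h).transpose := by
  have entry : ∀ i j : Fin (m + 1), tInv h m {i} {j} =
      (-1 : ℝ) ^ ((i : ℕ) + (j : ℕ)) * (h.submatrix (Fin.succAbove i) (Fin.succAbove j)).det := by
    intro i j
    have hm : m + 1 - 1 - m = 0 := by omega
    have hfac : (m.factorial : ℝ) ≠ 0 := by positivity
    rw [tInv, hm, Pi.smul_apply, Pi.smul_apply, smul_eq_mul, hstar_singleton, dpow_zero_wedge,
      dpow_ofMatrix_apply, minor_compl_singleton]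
    field_simp
    simp
  refine ⟨entry, ?_⟩
  ext i j
  rw [Matrix.of_apply, entry, Matrix.transpose_apply, Matrix.adjugate_fin_succ_eq_det_submatrix]
end
end

section
/- Let n = 2k be even and let R be a symmetric (2,2)-double form satisfying the first Bianchi identity on an n-dimensional real inner product space (V,g). Then the top cofactor transformation vanishes: T_n(R) := (c^n(R^k)/n!)·g − c^{n−1}(R^k)/(n−1)! = 0 as a bilinear form on V. -/
noncomputable section

open Finset

/-!
Since `R` is a `(2,2)`-form and `n = 2k`, `R^k` is an `(n,n)`-form, hence `λ e_V ⊗ e_V` for a scalar `λ`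
and the volume element `e_V`. Contracting a multiple of the "diagonal" `(m+1,m+1)`-form
`∑_{|I| = m+1} e_I ⊗ e_I` gives `n - m` times the diagonal `(m,m)`-form, so
`c^r(R^k) = r! λ ∑_{|I| = n-r} e_I ⊗ e_I`. In particular `c^n(R^k) = n! λ` and
`c^{n-1}(R^k) = (n-1)! λ g`, and the two terms of `T_n(R)` cancel.
-/

namespace DForm

variable {n : ℕ}

lemma shuffleSign_mul_self (A B : Finset (Fin n)) : shuffleSign A B * shuffleSign A B = 1 := by
  rw [shuffleSign, ← pow_add]
  exact Even.neg_one_pow ⟨_, rfl⟩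

lemma IsOfDeg.wedge {ω₁ ω₂ : DForm n} {p q r s : ℕ} (h₁ : IsOfDeg ω₁ p q)
    (h₂ : IsOfDeg ω₂ r s) : IsOfDeg (wedge ω₁ ω₂) (p + r) (q + s) := by
  intro I J hIJ
  obtain ⟨A, hA, hA_ne⟩ := exists_ne_zero_of_sum_ne_zero hIJ
  obtain ⟨B, hB, hAB_ne⟩ := exists_ne_zero_of_sum_ne_zero hA_ne
  obtain ⟨hA_card, hB_card⟩ := h₁ A B (by contrapose! hAB_ne; simp [hAB_ne])
  obtain ⟨hIA_card, hJB_card⟩ := h₂ (I \ A) (J \ B) (by contrapose! hAB_ne; simp [hAB_ne])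
  rw [mem_powerset] at hA hB
  constructor
  · rw [← card_sdiff_add_card_eq_card hA, hA_card, hIA_card, add_comm]
  · rw [← card_sdiff_add_card_eq_card hB, hB_card, hJB_card, add_comm]

lemma IsOfDeg.dpow {ω : DForm n} {p q : ℕ} (h : IsOfDeg ω p q) (m : ℕ) :
    IsOfDeg (dpow ω m) (m * p) (m * q) := by
  induction m with
  | zero =>
    intro I J hIJ
    simp only [DForm.dpow, ne_eq, ite_eq_right_iff, not_forall] at hIJ
    simp [hIJ.1.1, hIJ.1.2]
  | succ m ih => simpa only [DForm.dpow, add_mul, one_mul, add_comm] using h.wedge ih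

def diagonal (m : ℕ) (c : ℝ) : DForm n := fun I J => if I = J ∧ I.card = m then c else 0

lemma diagonal_one (c : ℝ) : diagonal 1 c = c • gMetric n := by
  funext I J
  simp [diagonal, gMetric]

lemma IsOfDeg.eq_diagonal_top {ω : DForm n} (h : IsOfDeg ω n n) :
    ω = diagonal n (ω univ univ) := by
  funext I J
  have card_eq_iff {K : Finset (Fin n)} : K.card = n ↔ K = univ := by
    simpa using card_eq_iff_eq_univ K
  by_cases hω : ω I J = 0
  · rw [hω, diagonal]
    split_ifs with hIJ
    · rw [← hω, card_eq_iff.mp hIJ.2, ← hIJ.1, card_eq_iff.mp hIJ.2]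
    · rfl
  · obtain ⟨hI, hJ⟩ := h I J hω
    simp [diagonal, card_eq_iff.mp hI, card_eq_iff.mp hJ]

lemma contr_diagonal (m : ℕ) (c : ℝ) :
    contr (diagonal (m + 1) c) = diagonal (n := n) m ((n - m : ℕ) * c) := by
  funext I J
  simp only [contr, diagonal]
  split_ifs with hIJ
  · obtain ⟨rfl, hI⟩ := hIJ
    have term (j : Fin n) : (if j ∈ I ∨ j ∈ I then 0 else shuffleSign {j} I * shuffleSign {j} I *
        (if insert j I = insert j I ∧ (insert j I).card = m + 1 then c else 0))
        = if j ∈ I then 0 else c := by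
      by_cases hj : j ∈ I
      · simp [hj]
      · simp [hj, card_insert_of_notMem hj, hI, shuffleSign_mul_self]
    rw [sum_congr rfl fun j _ => term j, sum_ite, sum_const_zero, zero_add, sum_const,
      filter_not, filter_mem_eq_inter, univ_inter, card_sdiff_of_subset (subset_univ I),
      card_univ, Fintype.card_fin, hI, nsmul_eq_mul]
  · refine sum_eq_zero fun j _ => ?_
    split_ifs with hj hins
    · rfl
    push Not at hj
    refine absurd ⟨?_, ?_⟩ hIJ
    · simpa [erase_insert hj.1, erase_insert hj.2] using congrArg (·.erase j) hins.1
    · simpa [card_insert_of_notMem hj.1] using hins.2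
    · rw [mul_zero]

lemma IsOfDeg.citer_top {ω : DForm n} (h : IsOfDeg ω n n) {r : ℕ} (hr : r ≤ n) :
    citer ω r = diagonal (n - r) (r.factorial * ω univ univ) := by
  induction r with
  | zero => simpa [citer] using h.eq_diagonal_top
  | succ r ih =>
    rw [citer, ih (by omega), show n - r = n - (r + 1) + 1 by omega, contr_diagonal,
      show n - (n - (r + 1)) = r + 1 by omega, Nat.factorial_succ]
    congr 1
    push_cast
    ring

end DForm

open DForm in
theorem statement15_general (n k : ℕ) (hn : n = 2 * k) (hk : 1 ≤ k) (R : DForm n)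
    (hgr : IsOfDeg R 2 2) :
    (toScalar (citer (dpow R k) n) / (n.factorial : ℝ)) • gMetric n
      - (((n - 1).factorial : ℕ) : ℝ)⁻¹ • citer (dpow R k) (n - 1) = 0 := by
  have htop : IsOfDeg (dpow R k) n n := by
    simpa only [show k * 2 = n by omega] using hgr.dpow k
  set lam := dpow R k univ univ
  have hfull : toScalar (citer (dpow R k) n) = n.factorial * lam := by
    simp [toScalar, htop.citer_top le_rfl, diagonal, lam]
  have hnext : citer (dpow R k) (n - 1) = ((n - 1).factorial * lam) • gMetric n := by
    rw [htop.citer_top (by omega), show n - (n - 1) = 1 by omega, diagonal_one]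
  rw [hfull, hnext, smul_smul, mul_div_cancel_left₀ _ (by positivity),
    inv_mul_cancel_left₀ (by positivity), sub_self]

open DForm in
/-- For `n = 2k` even, the top cofactor transformation vanishes:
`T_n(R) = (c^n(R^k)/n!) g - c^{n-1}(R^k)/(n-1)! = 0`. -/
theorem statement15 (n k : ℕ) (hn : n = 2 * k) (hk : 1 ≤ k) (R : DForm n)
    (hsym : IsSym R) (hb : Bianchi2 R) (hgr : IsOfDeg R 2 2) :
    (toScalar (citer (dpow R k) n) / (n.factorial : ℝ)) • gMetric n
      - (((n - 1).factorial : ℕ) : ℝ)⁻¹ • citer (dpow R k) (n - 1) = 0 :=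
  statement15_general n k hn hk R hgr
end
end
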